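/- Let α : U → ℝ be smooth (no equation is assumed), and let u, v₁, v be real numbers with v₁ ≤ v such that the segment {u} × [v₁, v] is contained in U. Then for all integers k ≥ 0 and j ≥ 0: ( ((r²/D)∂ᵥ)^k α )(u, v) = Σ_{i=0}^{j} (1/i!) · ( 1/r(u,v₁) − 1/r(u,v) )^i · ( ((r²/D)∂ᵥ)^(k+i) α )(u, v₁) + ∫_{v₁}^{v} (D/r²)(u,t₁) ∫_{v₁}^{t₁} (D/r²)(u,t₂) ⋯ ∫_{v₁}^{t_j} (D/r²)(u,t_{j+1}) · ( ((r²/D)∂ᵥ)^(k+j+1) α )(u, t_{j+1}) dt_{j+1} ⋯ dt₁, where the remainder consists of j+1 nested integrals. (This is the identity of Proposition 10.5, eq. (10.13), stated there with k = ℓ−s−j; in particular the remainder vanishes identically when ((r²/D)∂ᵥ)^(k+j+1) α ≡ 0.) -/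

import Mathlib

open scoped ContDiff

noncomputable section

/-- Partial derivative with respect to the first (`u`) null coordinate. -/
def pdu (f : ℝ × ℝ → ℝ) : ℝ × ℝ → ℝ := fun p => deriv (fun x => f (x, p.2)) p.1

/-- Partial derivative with respect to the second (`v`) null coordinate. -/
def pdv (f : ℝ × ℝ → ℝ) : ℝ × ℝ → ℝ := fun p => deriv (fun y => f (p.1, y)) p.2

/-- `D = 1 - 2M/r`. -/
def Dfun (M : ℝ) (r : ℝ × ℝ → ℝ) : ℝ × ℝ → ℝ := fun p => 1 - 2 * M / r p

/-- The weighted transversal derivative operator `(r²/D)∂ᵥ`. -/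
def Pv (M : ℝ) (r f : ℝ × ℝ → ℝ) : ℝ × ℝ → ℝ := fun p => (r p) ^ 2 / Dfun M r p * pdv f p

/-- `nestInt v₁ w f m` is the `(m+1)`-fold nested integral
`∫_{v₁}^{t} w(t₁) ∫_{v₁}^{t₁} w(t₂) ⋯ ∫_{v₁}^{t_m} w(t_{m+1}) f(t_{m+1}) dt_{m+1} ⋯ dt₁`. -/
noncomputable def nestInt (v₁ : ℝ) (w f : ℝ → ℝ) : ℕ → ℝ → ℝ
  | 0, t => ∫ x in v₁..t, w x * f x
  | m + 1, t => ∫ x in v₁..t, w x * nestInt v₁ w f m x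

/-!
Along the segment put `w = D/r²`, `ρ(t) = 1/r(u,v₁) - 1/r(u,t)` and
`F m t = ((r²/D)∂ᵥ)^m α (u,t)`. Since `∂ᵥr = D` we have `ρ' = w` and `(F m)' = w · F (m+1)`,
so the identity is Taylor's formula in the variable `ρ`: by the fundamental theorem of calculus
`F m = F m v₁ + ∫ w · F (m+1)`, and the `(j+1)`-fold `w`-weighted integral of a constant `c`
is `c ρ^(j+1)/(j+1)!`, so each application peels one Taylor term off the remainder.
-/

open Set intervalIntegral Nat

section

variable {a b : ℝ} {w ρ : ℝ → ℝ}

theorem uIcc_subset_Icc_of_mem {t : ℝ} (ht : t ∈ Icc a b) : uIcc a t ⊆ Icc a b :=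
  uIcc_subset_Icc (left_mem_Icc.2 (ht.1.trans ht.2)) ht

theorem integral_eq_sub_of_hasDerivAt_Icc {F f : ℝ → ℝ} (hf : ContinuousOn f (Icc a b))
    (hF : ∀ x ∈ Icc a b, HasDerivAt F (f x) x) {t : ℝ} (ht : t ∈ Icc a b) :
    ∫ x in a..t, f x = F t - F a :=
  integral_eq_sub_of_hasDerivAt (fun x hx => hF x (uIcc_subset_Icc_of_mem ht hx))
    (hf.mono (uIcc_subset_Icc_of_mem ht)).intervalIntegrable

theorem continuousOn_primitive_mul (hab : a ≤ b) {g : ℝ → ℝ} (hw : ContinuousOn w (Icc a b))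
    (hg : ContinuousOn g (Icc a b)) :
    ContinuousOn (fun t => ∫ x in a..t, w x * g x) (Icc a b) := by
  have h := continuousOn_primitive_interval (μ := MeasureTheory.volume) (a := a) (b := b)
    (f := fun x => w x * g x) (by rw [uIcc_of_le hab]; exact (hw.mul hg).integrableOn_Icc)
  rwa [uIcc_of_le hab] at h

theorem nestInt.continuousOn (hab : a ≤ b) {f : ℝ → ℝ} (hw : ContinuousOn w (Icc a b))
    (hf : ContinuousOn f (Icc a b)) (j : ℕ) : ContinuousOn (nestInt a w f j) (Icc a b) := by
  induction j with
  | zero => exact continuousOn_primitive_mul hab hw hf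
  | succ j ih => exact continuousOn_primitive_mul hab hw ih

theorem nestInt_nestInt_zero (f : ℝ → ℝ) (j : ℕ) :
    nestInt a w (nestInt a w f 0) j = nestInt a w f (j + 1) := by
  induction j with
  | zero => rfl
  | succ j ih => funext t; exact congrArg (fun g => ∫ x in a..t, w x * g x) ih

section Weight

variable (hw : ContinuousOn w (Icc a b)) (hρa : ρ a = 0)
  (hρ : ∀ x ∈ Icc a b, HasDerivAt ρ (w x) x)
include hw hρa hρ

theorem integral_mul_pow_of_hasDerivAt (n : ℕ) {t : ℝ} (ht : t ∈ Icc a b) :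
    ∫ x in a..t, w x * ρ x ^ n = ρ t ^ (n + 1) / (n + 1) := by
  have hρc : ContinuousOn ρ (Icc a b) := fun x hx => (hρ x hx).continuousAt.continuousWithinAt
  have hder : ∀ x ∈ Icc a b, HasDerivAt (fun y => ρ y ^ (n + 1) / (n + 1)) (w x * ρ x ^ n) x :=
    fun x hx => (((hρ x hx).pow (n + 1)).div_const _).congr_deriv
      (by rw [Nat.add_sub_cancel]; push_cast; field_simp)
  rw [integral_eq_sub_of_hasDerivAt_Icc (f := fun x => w x * ρ x ^ n) (hw.mul (hρc.pow n)) hder ht]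
  simp [hρa]

theorem integral_mul_eq_const_mul_pow_add {N G : ℝ → ℝ} {c : ℝ} (n : ℕ)
    (hG : ContinuousOn G (Icc a b)) (hN : EqOn N (fun x => c * ρ x ^ n / n ! + G x) (Icc a b))
    {t : ℝ} (ht : t ∈ Icc a b) :
    ∫ x in a..t, w x * N x = c * ρ t ^ (n + 1) / (n + 1)! + ∫ x in a..t, w x * G x := by
  have hsub := uIcc_subset_Icc_of_mem ht
  have hρc : ContinuousOn ρ (Icc a b) := fun x hx => (hρ x hx).continuousAt.continuousWithinAt
  have hsplit : EqOn (fun x => w x * N x)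
      (fun x => c / n ! * (w x * ρ x ^ n) + w x * G x) (uIcc a t) := fun x hx => by
    simp only [hN (hsub hx)]; ring
  rw [integral_congr hsplit, integral_add, integral_const_mul,
    integral_mul_pow_of_hasDerivAt hw hρa hρ n ht, Nat.factorial_succ]
  · push_cast; field_simp
  · exact (continuousOn_const.mul ((hw.mul (hρc.pow n)).mono hsub)).intervalIntegrable
  · exact ((hw.mul hG).mono hsub).intervalIntegrable

theorem nestInt_eq_of_eqOn_const_add {f g : ℝ → ℝ} {c : ℝ} (hg : ContinuousOn g (Icc a b))
    (hfg : EqOn f (fun x => c + g x) (Icc a b)) (j : ℕ) {t : ℝ} (ht : t ∈ Icc a b) :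
    nestInt a w f j t = c * ρ t ^ (j + 1) / (j + 1)! + nestInt a w g j t := by
  have hab : a ≤ b := ht.1.trans ht.2
  induction j generalizing t with
  | zero => exact integral_mul_eq_const_mul_pow_add hw hρa hρ 0 hg (by simpa using hfg) ht
  | succ j ih =>
    exact integral_mul_eq_const_mul_pow_add hw hρa hρ (j + 1) (nestInt.continuousOn hab hw hg j)
      (fun x hx => ih hx) ht

variable {F : ℕ → ℝ → ℝ} (hF : ∀ m, ∀ x ∈ Icc a b, HasDerivAt (F m) (w x * F (m + 1) x) x)
include hF

theorem nestInt_eq_pow_mul_add_nestInt_succ (m j : ℕ) {t : ℝ} (ht : t ∈ Icc a b) :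
    nestInt a w (F m) j t =
      ρ t ^ (j + 1) / (j + 1)! * F m a + nestInt a w (F (m + 1)) (j + 1) t := by
  have hFc : ContinuousOn (F (m + 1)) (Icc a b) :=
    fun x hx => (hF (m + 1) x hx).continuousAt.continuousWithinAt
  have hFm : EqOn (F m) (fun x => F m a + nestInt a w (F (m + 1)) 0 x) (Icc a b) := fun x hx => by
    simp only [nestInt,
      integral_eq_sub_of_hasDerivAt_Icc (f := fun y => w y * F (m + 1) y) (hw.mul hFc) (hF m) hx]
    ring
  rw [nestInt_eq_of_eqOn_const_add hw hρa hρ (nestInt.continuousOn (ht.1.trans ht.2) hw hFc 0)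
    hFm j ht, nestInt_nestInt_zero]
  ring

theorem taylor_nestInt (hab : a ≤ b) (k j : ℕ) :
    F k b = (∑ i ∈ Finset.range (j + 1), 1 / (i ! : ℝ) * ρ b ^ i * F (k + i) a)
      + nestInt a w (F (k + j + 1)) j b := by
  have hb : b ∈ Icc a b := right_mem_Icc.2 hab
  induction j with
  | zero =>
    have hFc : ContinuousOn (F (k + 1)) (Icc a b) :=
      fun x hx => (hF (k + 1) x hx).continuousAt.continuousWithinAt
    simp only [nestInt,
      integral_eq_sub_of_hasDerivAt_Icc (f := fun y => w y * F (k + 1) y) (hw.mul hFc) (hF k) hb]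
    simp
  | succ j ih =>
    rw [ih, nestInt_eq_pow_mul_add_nestInt_succ hw hρa hρ hF (k + j + 1) j hb,
      Finset.sum_range_succ _ (j + 1), ← Nat.add_assoc k j 1]
    ring

end Weight

end

theorem hasDerivAt_pdv {f : ℝ × ℝ → ℝ} {p : ℝ × ℝ} (hf : DifferentiableAt ℝ f p) :
    HasDerivAt (fun y => f (p.1, y)) (pdv f p) p.2 :=
  (hf.comp p.2 ((differentiableAt_const p.1).prodMk differentiableAt_id)).hasDerivAt

theorem pdv_eq_fderiv {f : ℝ × ℝ → ℝ} {p : ℝ × ℝ} (hf : DifferentiableAt ℝ f p) :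
    pdv f p = fderiv ℝ f p (0, 1) :=
  (hasDerivAt_pdv hf).unique
    (hf.hasFDerivAt.comp_hasDerivAt p.2 ((hasDerivAt_const _ p.1).prodMk (hasDerivAt_id _)))

theorem contDiffOn_Dfun {U : Set (ℝ × ℝ)} {M : ℝ} {r : ℝ × ℝ → ℝ} (hr : ContDiffOn ℝ ∞ r U)
    (hr0 : ∀ p ∈ U, r p ≠ 0) : ContDiffOn ℝ ∞ (Dfun M r) U :=
  contDiffOn_const.sub (contDiffOn_const.div hr hr0)

section OpenSet

variable {U : Set (ℝ × ℝ)} (hU : IsOpen U)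
include hU

theorem contDiffOn_pdv {f : ℝ × ℝ → ℝ} (hf : ContDiffOn ℝ ∞ f U) :
    ContDiffOn ℝ ∞ (pdv f) U :=
  ((hf.fderiv_of_isOpen hU (by simp)).clm_apply contDiffOn_const).congr fun p hp =>
    pdv_eq_fderiv ((hf.contDiffAt (hU.mem_nhds hp)).differentiableAt (by simp))

variable {M : ℝ} {r : ℝ × ℝ → ℝ} (hr : ContDiffOn ℝ ∞ r U) (hr0 : ∀ p ∈ U, r p ≠ 0)
include hr hr0

theorem contDiffOn_iterate_Pv (hD : ∀ p ∈ U, Dfun M r p ≠ 0) {f : ℝ × ℝ → ℝ}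
    (hf : ContDiffOn ℝ ∞ f U) (m : ℕ) : ContDiffOn ℝ ∞ ((Pv M r)^[m] f) U := by
  induction m with
  | zero => exact hf
  | succ m ih =>
    rw [Function.iterate_succ_apply']
    exact ((hr.pow 2).div (contDiffOn_Dfun hr hr0) hD).mul (contDiffOn_pdv hU ih)

end OpenSet

theorem Dfun_pos {M : ℝ} {r : ℝ × ℝ → ℝ} {p : ℝ × ℝ} (hM : 0 ≤ M) (hr : 2 * M < r p) :
    0 < Dfun M r p := by
  have : 0 < r p := by linarith
  rwa [Dfun, sub_pos, div_lt_one this]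

theorem hasDerivAt_slice_Pv {M : ℝ} {r f : ℝ × ℝ → ℝ} {p : ℝ × ℝ}
    (hf : DifferentiableAt ℝ f p) (hr : r p ≠ 0) (hD : Dfun M r p ≠ 0) :
    HasDerivAt (fun y => f (p.1, y)) (Dfun M r p / r p ^ 2 * Pv M r f p) p.2 :=
  (hasDerivAt_pdv hf).congr_deriv (by rw [Pv]; field_simp)

theorem hasDerivAt_sub_inv_slice {M c : ℝ} {r : ℝ × ℝ → ℝ} {p : ℝ × ℝ}
    (hr : DifferentiableAt ℝ r p) (hrv : pdv r p = Dfun M r p) (hr0 : r p ≠ 0) :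
    HasDerivAt (fun y => c - 1 / r (p.1, y)) (Dfun M r p / r p ^ 2) p.2 := by
  simpa only [one_div, hrv, neg_div, neg_neg] using ((hasDerivAt_pdv hr).fun_inv hr0).const_sub c

theorem nested_transversal_identity_general
    (M : ℝ) (hM : 0 ≤ M)
    (U : Set (ℝ × ℝ)) (hUopen : IsOpen U)
    (r : ℝ × ℝ → ℝ) (hr : ContDiffOn ℝ ∞ r U)
    (hr2M : ∀ p ∈ U, 2 * M < r p)
    (hrv : ∀ p ∈ U, pdv r p = 1 - 2 * M / r p)
    (α : ℝ × ℝ → ℝ) (hα : ContDiffOn ℝ ∞ α U)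
    (u v₁ v : ℝ) (hv : v₁ ≤ v)
    (hseg : ∀ t ∈ Set.Icc v₁ v, (u, t) ∈ U)
    (k j : ℕ) :
    ((Pv M r)^[k] α) (u, v) =
      (∑ i ∈ Finset.range (j + 1),
          1 / (Nat.factorial i : ℝ) * (1 / r (u, v₁) - 1 / r (u, v)) ^ i *
            ((Pv M r)^[k + i] α) (u, v₁)) +
        nestInt v₁ (fun t => Dfun M r (u, t) / (r (u, t)) ^ 2)
          (fun t => ((Pv M r)^[k + j + 1] α) (u, t)) j v := by
  have hr0 : ∀ p ∈ U, r p ≠ 0 := fun p hp => by linarith [hr2M p hp]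
  have hD0 : ∀ p ∈ U, Dfun M r p ≠ 0 := fun p hp => (Dfun_pos hM (hr2M p hp)).ne'
  have hdiff : ∀ {f : ℝ × ℝ → ℝ}, ContDiffOn ℝ ∞ f U → ∀ p ∈ U, DifferentiableAt ℝ f p :=
    fun hf p hp => (hf.contDiffAt (hUopen.mem_nhds hp)).differentiableAt (by simp)
  have hw : ContinuousOn (fun t => Dfun M r (u, t) / r (u, t) ^ 2) (Icc v₁ v) :=
    ((contDiffOn_Dfun hr hr0).div (hr.pow 2) fun p hp => pow_ne_zero 2 (hr0 p hp)).continuousOn.comp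
      (continuous_const.prodMk continuous_id).continuousOn hseg
  refine taylor_nestInt (F := fun m t => ((Pv M r)^[m] α) (u, t))
    (ρ := fun t => 1 / r (u, v₁) - 1 / r (u, t)) hw (sub_self _)
    (fun t ht => hasDerivAt_sub_inv_slice (hdiff hr _ (hseg t ht)) (hrv _ (hseg t ht))
      (hr0 _ (hseg t ht))) (fun m t ht => ?_) hv k j
  rw [Function.iterate_succ_apply']
  exact hasDerivAt_slice_Pv (hdiff (contDiffOn_iterate_Pv hUopen hr hr0 hD0 hα m) _ (hseg t ht))
    (hr0 _ (hseg t ht)) (hD0 _ (hseg t ht))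

/-- The identity of Proposition 10.5, eq. (10.13): Taylor expansion with nested integral
remainder for the weighted transversal derivatives `((r²/D)∂ᵥ)^k α` along an outgoing cone. -/
theorem nested_transversal_identity
    (M : ℝ) (hM : 0 ≤ M)
    (U : Set (ℝ × ℝ)) (hUopen : IsOpen U)
    (r : ℝ × ℝ → ℝ) (hr : ContDiffOn ℝ ∞ r U)
    (hr2M : ∀ p ∈ U, 2 * M < r p)
    (hru : ∀ p ∈ U, pdu r p = -(1 - 2 * M / r p))
    (hrv : ∀ p ∈ U, pdv r p = 1 - 2 * M / r p)
    (α : ℝ × ℝ → ℝ) (hα : ContDiffOn ℝ ∞ α U)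
    (u v₁ v : ℝ) (hv : v₁ ≤ v)
    (hseg : ∀ t ∈ Set.Icc v₁ v, (u, t) ∈ U)
    (k j : ℕ) :
    ((Pv M r)^[k] α) (u, v) =
      (∑ i ∈ Finset.range (j + 1),
          1 / (Nat.factorial i : ℝ) * (1 / r (u, v₁) - 1 / r (u, v)) ^ i *
            ((Pv M r)^[k + i] α) (u, v₁)) +
        nestInt v₁ (fun t => Dfun M r (u, t) / (r (u, t)) ^ 2)
          (fun t => ((Pv M r)^[k + j + 1] α) (u, t)) j v :=
  nested_transversal_identity_general M hM U hUopen r hr hr2M hrv α hα u v₁ v hv hseg k j
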